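/- Let p be prime, k ≥ 1, and S ⊆ ℤ/p^kℤ a primitive formal-dual set (S admits a formally dual set T′, S is not contained in a proper coset, and T′ is not contained in a proper coset). Then ν_S(p^{k−1}) < |S|. -/
import Mathlib


open Finset Complex

/-- Weight enumerator: number of ordered pairs in `S × S` with difference `y`. -/
def nuW {n : ℕ} [NeZero n] (S : Finset (ZMod n)) (y : ZMod n) : ℕ :=
  ((S ×ˢ S).filter (fun p => p.1 - p.2 = y)).card

/-- `n`-th root of unity `ζ_n = exp(2πi/n)`. -/
noncomputable def zetaC (n : ℕ) : ℂ := Complex.exp (2 * Real.pi * Complex.I / n)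

/-- Formal duality of `S, T ⊆ ℤ/nℤ` (both directions). -/
def IsFormallyDual {n : ℕ} [NeZero n] (S T : Finset (ZMod n)) : Prop :=
  S.Nonempty ∧ T.Nonempty ∧
  (∀ y : ZMod n, ((S.card : ℂ) ^ 2 / (T.card : ℂ)) * (nuW T y : ℂ) =
    ∑ v : ZMod n, (nuW S v : ℂ) * zetaC n ^ (v.val * y.val)) ∧
  (∀ y : ZMod n, ((T.card : ℂ) ^ 2 / (S.card : ℂ)) * (nuW S y : ℂ) =
    ∑ v : ZMod n, (nuW T v : ℂ) * zetaC n ^ (v.val * y.val))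

/-- `S` is contained in a coset of a proper (additive) subgroup. -/
def InProperCoset {m : ℕ} [NeZero m] (S : Finset (ZMod m)) : Prop :=
  ∃ H : AddSubgroup (ZMod m), H ≠ ⊤ ∧ ∃ c : ZMod m, ∀ x ∈ S, x - c ∈ H

lemma zeta_prim (n : ℕ) [NeZero n] : IsPrimitiveRoot (zetaC n) n :=
  Complex.isPrimitiveRoot_exp n (NeZero.ne n)

lemma zeta_pow_mod {n : ℕ} [NeZero n] (m : ℕ) : zetaC n ^ m = zetaC n ^ (m % n) := by
  conv_lhs => rw [← Nat.div_add_mod m n]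
  rw [pow_add, pow_mul, (zeta_prim n).pow_eq_one, one_pow, one_mul]

lemma zeta_pow_val_mul {n : ℕ} [NeZero n] (v y : ZMod n) :
    zetaC n ^ (v.val * y.val) = zetaC n ^ (v * y).val := by
  rw [zeta_pow_mod, ZMod.val_mul]

lemma zeta_pow_val_add {n : ℕ} [NeZero n] (v y : ZMod n) :
    zetaC n ^ (v + y).val = zetaC n ^ v.val * zetaC n ^ y.val := by
  rw [← pow_add, ZMod.val_add, ← zeta_pow_mod]

lemma zeta_pow_eq_one_iff {n : ℕ} [NeZero n] (w : ZMod n) :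
    zetaC n ^ w.val = 1 ↔ w = 0 := by
  rw [(zeta_prim n).pow_eq_one_iff_dvd]
  constructor
  · intro h
    exact (ZMod.val_eq_zero w).mp (Nat.eq_zero_of_dvd_of_lt h (ZMod.val_lt w))
  · rintro rfl; simp

lemma nuW_le {n : ℕ} [NeZero n] (S : Finset (ZMod n)) (y : ZMod n) :
    nuW S y ≤ S.card := by
  apply Finset.card_le_card_of_injOn Prod.fst
  · intro pr hpr
    exact (Finset.mem_product.mp (Finset.mem_filter.mp hpr).1).1
  · intro a ha b hb hab
    have ha' := (Finset.mem_filter.mp ha).2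
    have hb' := (Finset.mem_filter.mp hb).2
    have h2 : a.2 = b.2 := by
      have h3 : b.1 - a.2 = b.1 - b.2 := by rw [← hab] at hb' ⊢; exact ha'.trans hb'.symm
      exact sub_right_injective h3
    exact Prod.ext hab h2

lemma sum_nuW_eq_zero {n : ℕ} [NeZero n] (S : Finset (ZMod n)) (h y : ZMod n)
    (hS1 : ∀ a ∈ S, a + h ∈ S) (hS2 : ∀ a ∈ S, a - h ∈ S) (hhy : h * y ≠ 0) :
    ∑ v : ZMod n, (nuW S v : ℂ) * zetaC n ^ (v.val * y.val) = 0 := by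
  set f : ZMod n × ZMod n → ℂ := fun pr => zetaC n ^ (((pr.1 - pr.2) * y).val) with hf
  have key : ∑ v : ZMod n, (nuW S v : ℂ) * zetaC n ^ (v.val * y.val)
      = ∑ pr ∈ S ×ˢ S, f pr := by
    rw [← Finset.sum_fiberwise' (S ×ˢ S) (fun pr => pr.1 - pr.2)
      (fun v => zetaC n ^ ((v * y).val))]
    refine Finset.sum_congr rfl fun v _ => ?_
    rw [Finset.sum_const, nsmul_eq_mul, nuW, zeta_pow_val_mul]
  have shift : ∑ pr ∈ S ×ˢ S, f pr
      = zetaC n ^ ((h * y).val) * ∑ pr ∈ S ×ˢ S, f pr := by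
    rw [Finset.mul_sum]
    refine Finset.sum_nbij' (i := fun pr => (pr.1 - h, pr.2))
      (j := fun pr => (pr.1 + h, pr.2)) ?_ ?_ ?_ ?_ ?_
    · intro a ha
      rw [Finset.mem_product] at ha ⊢
      exact ⟨hS2 _ ha.1, ha.2⟩
    · intro a ha
      rw [Finset.mem_product] at ha ⊢
      exact ⟨hS1 _ ha.1, ha.2⟩
    · intro a _; simp
    · intro a _; simp
    · intro a _
      simp only [hf]
      rw [← zeta_pow_val_add]
      congr 1
      ring_nf
  have hone : zetaC n ^ ((h * y).val) ≠ 1 := fun hc =>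
    hhy ((zeta_pow_eq_one_iff _).mp hc)
  have : (1 - zetaC n ^ ((h * y).val)) * (∑ pr ∈ S ×ˢ S, f pr) = 0 := by
    rw [sub_mul, one_mul, ← shift, sub_self]
  rcases mul_eq_zero.mp this with h0 | h0
  · exact absurd (by linear_combination -h0) hone
  · rw [key, h0]

theorem stmt14 (p k : ℕ) [Fact p.Prime] (hk : 1 ≤ k) (S T' : Finset (ZMod (p ^ k)))
    (hST' : IsFormallyDual S T') (hSnp : ¬ InProperCoset S) (hT'np : ¬ InProperCoset T') :
    nuW S ((p ^ (k - 1) : ℕ) : ZMod (p ^ k)) < S.card := by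
  obtain ⟨hSne, hTne, hdual, _⟩ := hST'
  by_contra hlt
  push_neg at hlt
  set h : ZMod (p ^ k) := ((p ^ (k - 1) : ℕ) : ZMod (p ^ k)) with hh
  have heq : nuW S h = S.card := le_antisymm (nuW_le S h) hlt
  have hp : p.Prime := Fact.out
  -- closure under subtracting h
  have hS2 : ∀ a ∈ S, a - h ∈ S := by
    intro a ha
    set F := (S ×ˢ S).filter (fun pr => pr.1 - pr.2 = h) with hF
    have hinj : Set.InjOn Prod.fst (F : Set (ZMod (p ^ k) × ZMod (p ^ k))) := by
      intro x hx y hy hxy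
      simp only [hF, Finset.coe_filter, Set.mem_setOf_eq] at hx hy
      have h3 : y.1 - x.2 = y.1 - y.2 := by
        rw [← hxy] at hy ⊢; exact hx.2.trans hy.2.symm
      exact Prod.ext hxy (sub_right_injective h3)
    have hsub : F.image Prod.fst ⊆ S := by
      intro x hx
      obtain ⟨pr, hpr, rfl⟩ := Finset.mem_image.mp hx
      exact (Finset.mem_product.mp (Finset.mem_filter.mp hpr).1).1
    have hcard : S.card ≤ (F.image Prod.fst).card := by
      rw [Finset.card_image_of_injOn hinj]
      have : F.card = nuW S h := by rw [hF, nuW]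
      omega
    have himg : F.image Prod.fst = S := Finset.eq_of_subset_of_card_le hsub hcard
    rw [← himg] at ha
    obtain ⟨pr, hpr, rfl⟩ := Finset.mem_image.mp ha
    have := Finset.mem_filter.mp hpr
    have h2 : pr.1 - h = pr.2 := by rw [← this.2]; ring
    rw [h2]
    exact (Finset.mem_product.mp this.1).2
  -- closure under adding h
  have hS1 : ∀ a ∈ S, a + h ∈ S := by
    have hsub : S.image (· - h) ⊆ S := by
      intro x hx
      obtain ⟨b, hb, rfl⟩ := Finset.mem_image.mp hx
      exact hS2 b hb
    have himg : S.image (· - h) = S :=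
      Finset.eq_of_subset_of_card_le hsub
        (by rw [Finset.card_image_of_injective _ (sub_left_injective)])
    intro a ha
    rw [← himg] at ha
    obtain ⟨b, hb, hba⟩ := Finset.mem_image.mp ha
    have : a + h = b := by rw [← hba]; ring
    rw [this]; exact hb
  -- nuW T' y = 0 whenever h * y ≠ 0
  have hcS : (S.card : ℂ) ≠ 0 := Nat.cast_ne_zero.mpr hSne.card_pos.ne'
  have hcT : (T'.card : ℂ) ≠ 0 := Nat.cast_ne_zero.mpr hTne.card_pos.ne'
  have hnu0 : ∀ y : ZMod (p ^ k), h * y ≠ 0 → nuW T' y = 0 := by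
    intro y hy
    have hd := hdual y
    rw [sum_nuW_eq_zero S h y hS1 hS2 hy] at hd
    rcases mul_eq_zero.mp hd with h0 | h0
    · exact absurd h0 (div_ne_zero (pow_ne_zero 2 hcS) hcT)
    · exact_mod_cast h0
  -- all differences z in T' satisfy h * z = 0
  have hdiff : ∀ a ∈ T', ∀ b ∈ T', h * (a - b) = 0 := by
    intro a ha b hb
    by_contra hz
    have h0 := hnu0 (a - b) hz
    have : (a, b) ∈ (T' ×ˢ T').filter (fun pr => pr.1 - pr.2 = a - b) := by
      simp [Finset.mem_product, ha, hb]
    have : 0 < nuW T' (a - b) := Finset.card_pos.mpr ⟨(a, b), this⟩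
    omega
  -- build the proper coset containing T'
  apply hT'np
  have hk0 : k ≠ 0 := by omega
  set φ : ZMod (p ^ k) →+* ZMod p := ZMod.castHom (dvd_pow_self p hk0) (ZMod p) with hφ
  refine ⟨AddMonoidHom.ker φ.toAddMonoidHom, ?_, hTne.choose, ?_⟩
  · intro htop
    have h1 : (1 : ZMod (p ^ k)) ∈ AddMonoidHom.ker φ.toAddMonoidHom := htop ▸ trivial
    rw [AddMonoidHom.mem_ker] at h1
    simp only [RingHom.toAddMonoidHom_eq_coe, AddMonoidHom.coe_coe, map_one] at h1
    exact one_ne_zero h1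
  · intro x hx
    have hz : h * (x - hTne.choose) = 0 := hdiff x hx _ hTne.choose_spec
    set z : ZMod (p ^ k) := x - hTne.choose with hzdef
    rw [AddMonoidHom.mem_ker]
    simp only [RingHom.toAddMonoidHom_eq_coe, AddMonoidHom.coe_coe]
    have hzv : ((z.val : ℕ) : ZMod (p ^ k)) = z := by
      rw [ZMod.natCast_val, ZMod.cast_id]
    have hdv : (p : ℕ) ^ k ∣ p ^ (k - 1) * z.val := by
      rw [← ZMod.natCast_eq_zero_iff]
      push_cast
      rw [hzv]
      have hph : ((p : ZMod (p ^ k))) ^ (k - 1) = h := by rw [hh]; push_cast; ring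
      rw [hph]
      exact hz
    have hpk : p ^ k = p ^ (k - 1) * p := by
      rw [← pow_succ]
      congr 1
      omega
    have hdv2 : p ^ (k - 1) * p ∣ p ^ (k - 1) * z.val := by rw [← hpk]; exact hdv
    have hpow : (p : ℕ) ^ (k - 1) ≠ 0 := pow_ne_zero _ hp.ne_zero
    have hpz : p ∣ z.val := (mul_dvd_mul_iff_left hpow).mp hdv2
    rw [hφ, ZMod.castHom_apply, ← ZMod.natCast_val]
    exact (ZMod.natCast_eq_zero_iff _ _).mpr hpz
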